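/- arXiv:1801.03930 — 5 statements merged into one kernel-verified Lean document; each statement's English description precedes it below -/
import Mathlib

section
/- The kernel of the linearized strain operator ε on smooth vector fields on a connected open set D ⊆ ℝ³ is exactly the 6-dimensional space of rigid body motions, spanned by the three translations r₁ = (1,0,0), r₂ = (0,1,0), r₃ = (0,0,1) and the three rotations r₄ = (0, x₃, −x₂), r₅ = (−x₃, 0, x₁), r₆ = (−x₂, x₁, 0). That is, a C¹ vector field u on D satisfies ε(u) = 0 if and only if u(x) = a + b × x for some constant vectors a, b ∈ ℝ³. -/
/-!
If the symmetric part of `Du` vanishes, the quadratic form `d ↦ Du(x) d ⬝ d` is zero, so the mean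
value theorem gives `(u x - u y) ⬝ (x - y) = 0` on every convex part of `D`. Polarizing this at a
point `c` and differentiating in the free point shows `u x = u c + Du(c) (x - c)` near `c`. Hence
`Du` is locally constant, so constant on the connected set `D`, and `u` is affine there with a
skew linear part, which in dimension three is `x ↦ b × x`.
-/

open Matrix Topology

variable {ι : Type*} [Fintype ι]

theorem forall_apply_single_add_eq_zero_iff [DecidableEq ι] (L : (ι → ℝ) →ₗ[ℝ] (ι → ℝ)) :
    (∀ i j, L (Pi.single j 1) i + L (Pi.single i 1) j = 0) ↔ ∀ d, L d ⬝ᵥ d = 0 := by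
  constructor
  · intro h d
    let B : LinearMap.BilinForm ℝ (ι → ℝ) := (dotProductBilin ℝ ℝ).compl₁₂ L LinearMap.id
    have hB : B + B.flip = 0 :=
      LinearMap.ext_basis (Pi.basisFun ℝ ι) (Pi.basisFun ℝ ι) fun i j => by
        simpa [B, dotProduct_single] using h j i
    simpa only [LinearMap.add_apply, LinearMap.compl₁₂_apply, LinearMap.id_coe, id_eq,
      dotProductBilin_apply_apply, LinearMap.BilinForm.flip_apply, LinearMap.zero_apply,
      add_self_eq_zero, B] using LinearMap.congr_fun₂ hB d d
  · intro h i j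
    have hi := h (Pi.single i 1)
    have hj := h (Pi.single j 1)
    have hij := h (Pi.single i 1 + Pi.single j 1)
    simp only [map_add, dotProduct_add, dotProduct_single, Pi.add_apply, mul_one] at hi hj hij
    linarith

theorem dotProduct_apply_eq_neg {L : (ι → ℝ) →ₗ[ℝ] (ι → ℝ)} (hL : ∀ d, L d ⬝ᵥ d = 0)
    (v w : ι → ℝ) : L v ⬝ᵥ w = -(L w ⬝ᵥ v) := by
  have h := hL (v + w)
  simp only [map_add, add_dotProduct, dotProduct_add, hL] at h
  linarith

theorem HasFDerivAt.dotProduct_const {E : Type*} [NormedAddCommGroup E] [NormedSpace ℝ E]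
    {u : E → ι → ℝ} {u' : E →L[ℝ] ι → ℝ} {x : E} (hu : HasFDerivAt u u' x) (v : ι → ℝ) :
    HasFDerivAt (fun y => u y ⬝ᵥ v)
      ((LinearMap.toContinuousLinearMap ((dotProductBilin ℝ ℝ).flip v)).comp u') x :=
  (LinearMap.toContinuousLinearMap ((dotProductBilin ℝ ℝ).flip v)).hasFDerivAt.comp x hu

variable {u : (ι → ℝ) → ι → ℝ}

theorem fderiv_apply_single_add_eq_zero_iff [DecidableEq ι] {x : ι → ℝ}
    (hu : DifferentiableAt ℝ u x) :
    (∀ i j, fderiv ℝ (fun y => u y i) x (Pi.single j 1)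
        + fderiv ℝ (fun y => u y j) x (Pi.single i 1) = 0) ↔
      ∀ d, fderiv ℝ u x d ⬝ᵥ d = 0 := by
  simp only [fderiv_apply hu, ContinuousLinearMap.comp_apply, ContinuousLinearMap.proj_apply]
  exact forall_apply_single_add_eq_zero_iff (fderiv ℝ u x : (ι → ℝ) →ₗ[ℝ] ι → ℝ)

theorem dotProduct_sub_sub_eq_zero {S : Set (ι → ℝ)} (hS : Convex ℝ S)
    (hu : ∀ x ∈ S, DifferentiableAt ℝ u x) (hskew : ∀ x ∈ S, ∀ d, fderiv ℝ u x d ⬝ᵥ d = 0)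
    {x y : ι → ℝ} (hx : x ∈ S) (hy : y ∈ S) : (u x - u y) ⬝ᵥ (x - y) = 0 := by
  obtain ⟨z, hz, hmvt⟩ := domain_mvt
    (fun w hw => ((hu w hw).hasFDerivAt.dotProduct_const (x - y)).hasFDerivWithinAt) hS hy hx
  rw [sub_dotProduct, hmvt]
  simpa using hskew z (hS.segment_subset hy hx hz) (x - y)

theorem eq_add_fderiv_apply_sub {S : Set (ι → ℝ)} (hS : Convex ℝ S) (hSo : IsOpen S)
    (hu : ∀ x ∈ S, DifferentiableAt ℝ u x) (hskew : ∀ x ∈ S, ∀ d, fderiv ℝ u x d ⬝ᵥ d = 0)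
    {x c : ι → ℝ} (hx : x ∈ S) (hc : c ∈ S) : u x = u c + fderiv ℝ u c (x - c) := by
  have hpolar : ∀ y ∈ S, (y - c) ⬝ᵥ (u x - u c) = -((u y - u c) ⬝ᵥ (x - c)) := by
    intro y hy
    have hxy := dotProduct_sub_sub_eq_zero hS hu hskew hx hy
    have hxc := dotProduct_sub_sub_eq_zero hS hu hskew hx hc
    have hyc := dotProduct_sub_sub_eq_zero hS hu hskew hy hc
    simp only [sub_dotProduct, dotProduct_sub, dotProduct_comm _ (u _)] at hxy hxc hyc ⊢
    linarith
  have hleft := ((hasFDerivAt_id c).sub_const c).dotProduct_const (u x - u c)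
  have hright := (((hu c hc).hasFDerivAt.sub_const (u c)).dotProduct_const (x - c)).neg
  have hderiv := hleft.unique (hright.congr_of_eventuallyEq
    (Filter.eventuallyEq_of_mem (hSo.mem_nhds hc) hpolar))
  rw [← sub_eq_iff_eq_add', ← dotProduct_eq_iff]
  intro h
  have hh := congrArg (fun L => L h) hderiv
  simp only [ContinuousLinearMap.comp_apply, ContinuousLinearMap.id_apply,
    LinearMap.coe_toContinuousLinearMap', LinearMap.flip_apply, dotProductBilin_apply_apply] at hh
  rw [dotProduct_comm, hh]
  exact (dotProduct_apply_eq_neg (L := (fderiv ℝ u c : (ι → ℝ) →ₗ[ℝ] ι → ℝ))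
    (hskew c hc) _ _).symm

theorem eventually_fderiv_eq {D : Set (ι → ℝ)} (hD : IsOpen D)
    (hu : ∀ x ∈ D, DifferentiableAt ℝ u x) (hskew : ∀ x ∈ D, ∀ d, fderiv ℝ u x d ⬝ᵥ d = 0)
    {x : ι → ℝ} (hx : x ∈ D) : ∀ᶠ y in 𝓝 x, fderiv ℝ u y = fderiv ℝ u x := by
  obtain ⟨r, hr, hball⟩ := Metric.isOpen_iff.1 hD x hx
  filter_upwards [Metric.isOpen_ball.mem_nhds (Metric.mem_ball_self hr)] with y hy
  have haffine : HasFDerivAt (fun z => u x + fderiv ℝ u x (z - x)) (fderiv ℝ u x) y := by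
    simpa using ((fderiv ℝ u x).hasFDerivAt.sub_const (fderiv ℝ u x x)).const_add (u x)
  refine (haffine.congr_of_eventuallyEq ?_).fderiv
  filter_upwards [Metric.isOpen_ball.mem_nhds hy] with z hz
  exact eq_add_fderiv_apply_sub (convex_ball x r) Metric.isOpen_ball
    (fun w hw => hu w (hball hw)) (fun w hw => hskew w (hball hw)) hz (Metric.mem_ball_self hr)

theorem exists_eq_add_fderiv_apply {D : Set (ι → ℝ)} (hD : IsOpen D) (hDc : IsPreconnected D)
    (hu : ∀ x ∈ D, DifferentiableAt ℝ u x) (hskew : ∀ x ∈ D, ∀ d, fderiv ℝ u x d ⬝ᵥ d = 0)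
    {x₀ : ι → ℝ} (hx₀ : x₀ ∈ D) : ∃ a, ∀ x ∈ D, u x = a + fderiv ℝ u x₀ x := by
  have hzero : ∀ x ∈ D, HasFDerivAt (fderiv ℝ u) (0 : (ι → ℝ) →L[ℝ] (ι → ℝ) →L[ℝ] ι → ℝ) x :=
    fun x hx => (hasFDerivAt_const _ x).congr_of_eventuallyEq (eventually_fderiv_eq hD hu hskew hx)
  have hconst : ∀ x ∈ D, fderiv ℝ u x = fderiv ℝ u x₀ := fun x hx =>
    hD.is_const_of_fderiv_eq_zero hDc
      (fun y hy => (hzero y hy).differentiableAt.differentiableWithinAt)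
      (fun y hy => (hzero y hy).fderiv) hx hx₀
  obtain ⟨a, ha⟩ := hD.exists_eq_add_of_fderiv_eq hDc
    (fun x hx => (hu x hx).differentiableWithinAt) (fderiv ℝ u x₀).differentiableOn
    (fun x hx => by simp [hconst x hx])
  exact ⟨a, fun x hx => (ha hx).trans (add_comm _ _)⟩

theorem exists_crossProduct_eq (L : (Fin 3 → ℝ) →ₗ[ℝ] (Fin 3 → ℝ)) (hL : ∀ d, L d ⬝ᵥ d = 0) :
    ∃ b, ∀ x, L x = b ⨯₃ x := by
  have h := (forall_apply_single_add_eq_zero_iff L).2 hL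
  refine ⟨![L (Pi.single 1 1) 2, L (Pi.single 2 1) 0, L (Pi.single 0 1) 1], fun x => ?_⟩
  refine LinearMap.congr_fun ((Pi.basisFun ℝ (Fin 3)).ext fun j => funext fun i => ?_) x
  fin_cases i <;> fin_cases j <;> simp [crossProduct] <;>
    linarith [h 0 0, h 0 1, h 0 2, h 1 1, h 1 2, h 2 2]

/-- The kernel of the linearized strain operator ε on a connected open set
D ⊆ ℝ³ is exactly the space of rigid body motions: ε(u) = 0 on D iff
u(x) = a + b × x for some constant vectors a, b. -/
theorem stmt4 (D : Set (Fin 3 → ℝ)) (hD : IsOpen D) (hconn : IsConnected D)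
    (u : (Fin 3 → ℝ) → (Fin 3 → ℝ)) (hu : ContDiffOn ℝ 1 u D) :
    (∀ x ∈ D, ∀ i j : Fin 3,
        fderiv ℝ (fun y => u y i) x (Pi.single j 1)
          + fderiv ℝ (fun y => u y j) x (Pi.single i 1) = 0)
      ↔ ∃ a b : Fin 3 → ℝ, ∀ x ∈ D, u x = a + crossProduct b x := by
  have hdiff : ∀ x ∈ D, DifferentiableAt ℝ u x := fun x hx =>
    (hu.differentiableOn one_ne_zero).differentiableAt (hD.mem_nhds hx)
  have hstrain := fun x hx => fderiv_apply_single_add_eq_zero_iff (hdiff x hx)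
  constructor
  · intro h
    have hskew := fun x hx => (hstrain x hx).1 (h x hx)
    obtain ⟨x₀, hx₀⟩ := hconn.nonempty
    obtain ⟨a, ha⟩ := exists_eq_add_fderiv_apply hD hconn.isPreconnected hdiff hskew hx₀
    obtain ⟨b, hb⟩ := exists_crossProduct_eq _ (hskew x₀ hx₀)
    exact ⟨a, b, fun x hx => (ha x hx).trans (congrArg _ (hb x))⟩
  · rintro ⟨a, b, hab⟩ x hx
    let B := LinearMap.toContinuousLinearMap (crossProduct b)
    have hrigid : HasFDerivAt u B x := (B.hasFDerivAt.const_add a).congr_of_eventuallyEq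
      (Filter.eventuallyEq_of_mem (hD.mem_nhds hx) hab)
    refine (hstrain x hx).2 fun d => ?_
    rw [hrigid.fderiv, dotProduct_comm]
    exact dot_cross_self b d
end

section
/- Let V be a finite-dimensional real inner product space with symmetric positive definite operator A, and let V = V₀ + V₁ + ⋯ + V_J be a space decomposition into subspaces. Let B_i be symmetric positive definite operators on V_i and define the additive Schwarz preconditioner B⁻¹ = Σ_i B_i⁻¹ Q_i, where Q_i is the orthogonal projection onto V_i. Suppose that for every v ∈ V there exists a decomposition v = Σ_i v_i with v_i ∈ V_i such that Σ_i (B_i v_i, v_i) ≤ C₀ (A v, v). Then the smallest eigenvalue of B⁻¹A satisfies λ_min(B⁻¹A) ≥ 1/C₀. -/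
/-!
Let `B⁻¹ A v = λ v` with `v ≠ 0` and put `uᵢ = Bᵢ⁻¹ Qᵢ A v`, so that `Σ uᵢ = λ v`. For every
`xᵢ ∈ Vᵢ` one has `(Bᵢ uᵢ, xᵢ) = (A v, xᵢ)`; hence, for a stable decomposition `v = Σ wᵢ`,
`Σ (Bᵢ uᵢ, wᵢ) = (A v, v)` and `Σ (Bᵢ uᵢ, uᵢ) = λ (A v, v)`. Summing the inequalities
`2 t (Bᵢ uᵢ, wᵢ) ≤ t² (Bᵢ uᵢ, uᵢ) + (Bᵢ wᵢ, wᵢ)` (positivity of `Bᵢ` at `t uᵢ - wᵢ`) at `t = C₀`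
gives
`2 C₀ (A v, v) ≤ C₀² λ (A v, v) + C₀ (A v, v)`, i.e. `1 ≤ C₀ λ`.
-/

open RealInnerProductSpace Finset

theorem two_mul_mul_inner_le {V : Type*} [NormedAddCommGroup V] [InnerProductSpace ℝ V]
    {S : Submodule ℝ V} {B : V →ₗ[ℝ] V}
    (hsymm : ∀ u ∈ S, ∀ v ∈ S, ⟪B u, v⟫ = ⟪u, B v⟫)
    (hnonneg : ∀ v ∈ S, 0 ≤ ⟪B v, v⟫) {u w : V} (hu : u ∈ S) (hw : w ∈ S) (t : ℝ) :
    2 * t * ⟪B u, w⟫ ≤ t ^ 2 * ⟪B u, u⟫ + ⟪B w, w⟫ := by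
  have hcross : ⟪B w, u⟫ = ⟪B u, w⟫ := by rw [hsymm w hw u hu, real_inner_comm]
  have h := hnonneg _ (S.sub_mem (S.smul_mem t hu) hw)
  simp only [map_sub, map_smul, inner_sub_left, inner_sub_right, real_inner_smul_left,
    real_inner_smul_right, hcross] at h
  nlinarith

theorem sum_inner_apply_inv_orthogonalProjection {V ι : Type*} [NormedAddCommGroup V]
    [InnerProductSpace ℝ V] [Fintype ι] {Vs : ι → Submodule ℝ V}
    [∀ i, (Vs i).HasOrthogonalProjection] {B Binv : ι → V →ₗ[ℝ] V}
    (hBinv : ∀ i, ∀ v ∈ Vs i, Binv i v ∈ Vs i ∧ B i (Binv i v) = v)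
    (y : V) {x : ι → V} (hx : ∀ i, x i ∈ Vs i) :
    ∑ i, ⟪B i (Binv i ((Vs i).orthogonalProjectionOnto y : V)), x i⟫ = ⟪y, ∑ i, x i⟫ := by
  rw [inner_sum]
  refine sum_congr rfl fun i _ => ?_
  rw [(hBinv i _ (Submodule.coe_mem _)).2]
  exact (Vs i).inner_orthogonalProjectionOnto_eq_of_mem_right ⟨x i, hx i⟩ y

theorem stmt7_general {V : Type*} [NormedAddCommGroup V] [InnerProductSpace ℝ V]
    [FiniteDimensional ℝ V]
    (J : ℕ) (Vs : Fin (J + 1) → Submodule ℝ V)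
    (A : V →ₗ[ℝ] V)
    (hApos : ∀ v, v ≠ 0 → 0 < ⟪A v, v⟫)
    (Bi : Fin (J + 1) → V →ₗ[ℝ] V)
    (hBsymm : ∀ i, ∀ u ∈ Vs i, ∀ v ∈ Vs i, ⟪Bi i u, v⟫ = ⟪u, Bi i v⟫)
    (hBpos : ∀ i, ∀ v ∈ Vs i, v ≠ 0 → 0 < ⟪Bi i v, v⟫)
    (Binv : Fin (J + 1) → V →ₗ[ℝ] V)
    (hBinv : ∀ i, ∀ v ∈ Vs i, Binv i v ∈ Vs i ∧ Bi i (Binv i v) = v)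
    (C₀ : ℝ) (hC₀ : 0 < C₀)
    (hstable : ∀ v : V, ∃ w : Fin (J + 1) → V, (∀ i, w i ∈ Vs i) ∧
        (∑ i, w i) = v ∧ (∑ i, ⟪Bi i (w i), w i⟫) ≤ C₀ * ⟪A v, v⟫) :
    ∀ (lam : ℝ) (v : V), v ≠ 0 →
      (∑ i, Binv i ((Submodule.orthogonalProjection (Vs i) (A v) : V))) = lam • v →
      1 / C₀ ≤ lam := by
  intro lam v hv hev
  obtain ⟨w, hw, hwsum, hwB⟩ := hstable v
  set u := fun i => Binv i ((Vs i).orthogonalProjectionOnto (A v) : V)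
  have hu i : u i ∈ Vs i := (hBinv i _ (Submodule.coe_mem _)).1
  have hBuw : ∑ i, ⟪Bi i (u i), w i⟫ = ⟪A v, v⟫ := by
    rw [sum_inner_apply_inv_orthogonalProjection hBinv _ hw, hwsum]
  have hBuu : ∑ i, ⟪Bi i (u i), u i⟫ = lam * ⟪A v, v⟫ := by
    rw [sum_inner_apply_inv_orthogonalProjection hBinv _ hu, hev, real_inner_smul_right,
      real_inner_comm]
  have hBnonneg i : ∀ x ∈ Vs i, 0 ≤ ⟪Bi i x, x⟫ := fun x hx => by
    rcases eq_or_ne x 0 with rfl | hx0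
    · simp
    · exact (hBpos i x hx hx0).le
  have key : 2 * C₀ * ⟪A v, v⟫ ≤ C₀ ^ 2 * (lam * ⟪A v, v⟫) + C₀ * ⟪A v, v⟫ :=
    calc 2 * C₀ * ⟪A v, v⟫ = ∑ i, 2 * C₀ * ⟪Bi i (u i), w i⟫ := by rw [← mul_sum, hBuw]
      _ ≤ ∑ i, (C₀ ^ 2 * ⟪Bi i (u i), u i⟫ + ⟪Bi i (w i), w i⟫) :=
        sum_le_sum fun i _ => two_mul_mul_inner_le (hBsymm i) (hBnonneg i) (hu i) (hw i) C₀
      _ ≤ C₀ ^ 2 * (lam * ⟪A v, v⟫) + C₀ * ⟪A v, v⟫ := by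
        rw [sum_add_distrib, ← mul_sum, hBuu]
        exact add_le_add_right hwB _
  have hAv := hApos v hv
  rw [div_le_iff₀ hC₀]
  nlinarith [mul_pos hC₀ hAv]

/-- Stable-decomposition (lower bound) lemma of abstract additive Schwarz
theory: if every v admits a decomposition v = Σᵢ vᵢ with
Σᵢ (Bᵢvᵢ, vᵢ) ≤ C₀ (Av, v), then λ_min(B⁻¹A) ≥ 1/C₀. -/
theorem stmt7 {V : Type*} [NormedAddCommGroup V] [InnerProductSpace ℝ V]
    [FiniteDimensional ℝ V]
    (J : ℕ) (Vs : Fin (J + 1) → Submodule ℝ V) (hsum : (⨆ i, Vs i) = ⊤)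
    (A : V →ₗ[ℝ] V)
    (hAsymm : ∀ u v, ⟪A u, v⟫ = ⟪u, A v⟫)
    (hApos : ∀ v, v ≠ 0 → 0 < ⟪A v, v⟫)
    (Bi : Fin (J + 1) → V →ₗ[ℝ] V)
    (hBmap : ∀ i, ∀ v ∈ Vs i, Bi i v ∈ Vs i)
    (hBsymm : ∀ i, ∀ u ∈ Vs i, ∀ v ∈ Vs i, ⟪Bi i u, v⟫ = ⟪u, Bi i v⟫)
    (hBpos : ∀ i, ∀ v ∈ Vs i, v ≠ 0 → 0 < ⟪Bi i v, v⟫)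
    (Binv : Fin (J + 1) → V →ₗ[ℝ] V)
    (hBinv : ∀ i, ∀ v ∈ Vs i, Binv i v ∈ Vs i ∧ Bi i (Binv i v) = v)
    (C₀ : ℝ) (hC₀ : 0 < C₀)
    (hstable : ∀ v : V, ∃ w : Fin (J + 1) → V, (∀ i, w i ∈ Vs i) ∧
        (∑ i, w i) = v ∧ (∑ i, ⟪Bi i (w i), w i⟫) ≤ C₀ * ⟪A v, v⟫) :
    ∀ (lam : ℝ) (v : V), v ≠ 0 →
      (∑ i, Binv i ((Submodule.orthogonalProjection (Vs i) (A v) : V))) = lam • v →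
      1 / C₀ ≤ lam :=
  stmt7_general J Vs A hApos Bi hBsymm hBpos Binv hBinv C₀ hC₀ hstable
end

section
/- Let V be a finite-dimensional real inner product space with symmetric positive definite operator A, subspaces V₀,…,V_J with V = Σ_i V_i, B_i symmetric positive definite on V_i, and B⁻¹ = Σ_i B_i⁻¹ Q_i with Q_i the orthogonal projection onto V_i. Suppose that for every decomposition v = Σ_i v_i with v_i ∈ V_i one has (A v, v) ≤ C₁ Σ_i (B_i v_i, v_i). Then λ_max(B⁻¹A) ≤ C₁. -/
/-!
Put `wᵢ := Bᵢ⁻¹ Qᵢ A v`. Since `Qᵢ` is self-adjoint and `wᵢ ∈ Vᵢ`, the local energies are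
`(Bᵢ wᵢ, wᵢ) = (A v, wᵢ)`, so for an eigenvector `B⁻¹ A v = λ v` they sum to `λ (A v, v)`.
Feeding the decomposition `λ v = Σᵢ wᵢ` into the hypothesis gives `λ² (A v, v) ≤ C₁ λ (A v, v)`,
hence `λ ≤ C₁`.
-/

open RealInnerProductSpace

theorem Submodule.inner_starProjection_left_of_mem {V : Type*} [NormedAddCommGroup V]
    [InnerProductSpace ℝ V] (K : Submodule ℝ V) [K.HasOrthogonalProjection] (x : V) {u : V}
    (hu : u ∈ K) : ⟪K.starProjection x, u⟫ = ⟪x, u⟫ := by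
  rw [K.inner_starProjection_left_eq_right, K.starProjection_eq_self_iff.mpr hu]

theorem sum_inner_local_solve_eq_inner_sum {V ι : Type*} [NormedAddCommGroup V]
    [InnerProductSpace ℝ V] [Fintype ι] (Vs : ι → Submodule ℝ V)
    [∀ i, (Vs i).HasOrthogonalProjection] (B : ι → V →ₗ[ℝ] V) (x : V) {w : ι → V}
    (hw : ∀ i, w i ∈ Vs i) (hBw : ∀ i, B i (w i) = (Vs i).starProjection x) :
    ∑ i, ⟪B i (w i), w i⟫ = ⟪x, ∑ i, w i⟫ := by
  rw [inner_sum]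
  exact Finset.sum_congr rfl fun i _ => by
    rw [hBw, (Vs i).inner_starProjection_left_of_mem x (hw i)]

theorem le_of_mul_mul_le_mul_mul {t C a : ℝ} (ha : 0 < a) (hC : 0 < C)
    (h : t * (t * a) ≤ C * (t * a)) : t ≤ C := by
  by_contra! hCt
  exact (mul_lt_mul_of_pos_right hCt (mul_pos (hC.trans hCt) ha)).not_ge h

theorem stmt8_general {V : Type*} [NormedAddCommGroup V] [InnerProductSpace ℝ V]
    [FiniteDimensional ℝ V]
    (J : ℕ) (Vs : Fin (J + 1) → Submodule ℝ V)
    (A : V →ₗ[ℝ] V)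
    (hApos : ∀ v, v ≠ 0 → 0 < ⟪A v, v⟫)
    (Bi : Fin (J + 1) → V →ₗ[ℝ] V)
    (Binv : Fin (J + 1) → V →ₗ[ℝ] V)
    (hBinv : ∀ i, ∀ v ∈ Vs i, Binv i v ∈ Vs i ∧ Bi i (Binv i v) = v)
    (C₁ : ℝ) (hC₁ : 0 < C₁)
    (hbound : ∀ w : Fin (J + 1) → V, (∀ i, w i ∈ Vs i) →
        ⟪A (∑ i, w i), ∑ i, w i⟫ ≤ C₁ * ∑ i, ⟪Bi i (w i), w i⟫) :
    ∀ (lam : ℝ) (v : V), v ≠ 0 →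
      (∑ i, Binv i ((Submodule.orthogonalProjectionOnto (Vs i) (A v) : V))) = lam • v →
      lam ≤ C₁ := by
  intro lam v hv heigen
  set w : Fin (J + 1) → V := fun i => Binv i ((Vs i).starProjection (A v))
  have hlocal : ∀ i, w i ∈ Vs i ∧ Bi i (w i) = (Vs i).starProjection (A v) := fun i =>
    hBinv i _ ((Vs i).starProjection_apply_mem (A v))
  have hsum : ∑ i, w i = lam • v := heigen
  have henergy : ∑ i, ⟪Bi i (w i), w i⟫ = lam * ⟪A v, v⟫ := by
    rw [sum_inner_local_solve_eq_inner_sum Vs Bi (A v) (fun i => (hlocal i).1)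
      (fun i => (hlocal i).2), hsum, real_inner_smul_right]
  have hstable := hbound w fun i => (hlocal i).1
  rw [henergy, hsum, map_smul, real_inner_smul_left, real_inner_smul_right] at hstable
  exact le_of_mul_mul_le_mul_mul (hApos v hv) hC₁ hstable

/-- Upper-bound half of abstract additive Schwarz theory: if for every
decomposition v = Σᵢ vᵢ one has (Av, v) ≤ C₁ Σᵢ (Bᵢvᵢ, vᵢ), then
λ_max(B⁻¹A) ≤ C₁. -/
theorem stmt8 {V : Type*} [NormedAddCommGroup V] [InnerProductSpace ℝ V]
    [FiniteDimensional ℝ V]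
    (J : ℕ) (Vs : Fin (J + 1) → Submodule ℝ V) (hsum : (⨆ i, Vs i) = ⊤)
    (A : V →ₗ[ℝ] V)
    (hAsymm : ∀ u v, ⟪A u, v⟫ = ⟪u, A v⟫)
    (hApos : ∀ v, v ≠ 0 → 0 < ⟪A v, v⟫)
    (Bi : Fin (J + 1) → V →ₗ[ℝ] V)
    (hBmap : ∀ i, ∀ v ∈ Vs i, Bi i v ∈ Vs i)
    (hBsymm : ∀ i, ∀ u ∈ Vs i, ∀ v ∈ Vs i, ⟪Bi i u, v⟫ = ⟪u, Bi i v⟫)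
    (hBpos : ∀ i, ∀ v ∈ Vs i, v ≠ 0 → 0 < ⟪Bi i v, v⟫)
    (Binv : Fin (J + 1) → V →ₗ[ℝ] V)
    (hBinv : ∀ i, ∀ v ∈ Vs i, Binv i v ∈ Vs i ∧ Bi i (Binv i v) = v)
    (C₁ : ℝ) (hC₁ : 0 < C₁)
    (hbound : ∀ w : Fin (J + 1) → V, (∀ i, w i ∈ Vs i) →
        ⟪A (∑ i, w i), ∑ i, w i⟫ ≤ C₁ * ∑ i, ⟪Bi i (w i), w i⟫) :
    ∀ (lam : ℝ) (v : V), v ≠ 0 →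
      (∑ i, Binv i ((Submodule.orthogonalProjectionOnto (Vs i) (A v) : V))) = lam • v →
      lam ≤ C₁ :=
  stmt8_general J Vs A hApos Bi Binv hBinv C₁ hC₁ hbound
end

section
/- Let V be a finite-dimensional real inner product space, A symmetric positive definite on V, and suppose the index set {0, 1, …, J} is colored with N_c colors such that whenever i ≠ j receive the same color, the subspaces V_i, V_j ⊆ V are A-orthogonal: 𝒜(v_i, v_j) = 0 for all v_i ∈ V_i, v_j ∈ V_j. Then for any v_i ∈ V_i, ‖Σ_i v_i‖²_A ≤ N_c Σ_i ‖v_i‖²_A, where ‖v‖²_A = 𝒜(v,v). -/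
/-!
Group the summands by colour, `u k = ∑_{c i = k} w i`. Within one colour the summands are
pairwise `𝒜`-orthogonal, so `𝒜 (u k) (u k) = ∑_{c i = k} 𝒜 (w i) (w i)`. Across colours, no
orthogonality is available, but
`∑_{k,l} 𝒜 (u k - u l) (u k - u l) = 2 (N_c ∑_k 𝒜 (u k) (u k) - 𝒜 (∑ u k) (∑ u k))`
is nonnegative.
-/

open Finset

namespace LinearMap

variable {R M ι : Type*} [CommRing R] [AddCommGroup M] [Module R M]

theorem apply_sum_sum (B : M →ₗ[R] M →ₗ[R] R) (s : Finset ι) (v : ι → M) :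
    B (∑ i ∈ s, v i) (∑ j ∈ s, v j) = ∑ i ∈ s, ∑ j ∈ s, B (v i) (v j) := by
  simp only [map_sum, sum_apply]
  exact sum_comm

theorem apply_sum_self_of_pairwise_eq_zero (B : M →ₗ[R] M →ₗ[R] R) (s : Finset ι) (v : ι → M)
    (horth : ∀ i ∈ s, ∀ j ∈ s, i ≠ j → B (v i) (v j) = 0) :
    B (∑ i ∈ s, v i) (∑ i ∈ s, v i) = ∑ i ∈ s, B (v i) (v i) := by
  rw [apply_sum_sum]
  refine sum_congr rfl fun i hi => sum_eq_single_of_mem i hi fun j hj hji => ?_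
  exact horth i hi j hj hji.symm

theorem apply_sum_self_le_card_mul [LinearOrder R] [IsStrictOrderedRing R]
    (B : M →ₗ[R] M →ₗ[R] R) (hB : ∀ x, 0 ≤ B x x) (s : Finset ι) (v : ι → M) :
    B (∑ i ∈ s, v i) (∑ i ∈ s, v i) ≤ #s * ∑ i ∈ s, B (v i) (v i) := by
  have hdiff : 0 ≤ ∑ i ∈ s, ∑ j ∈ s, B (v i - v j) (v i - v j) :=
    sum_nonneg fun i _ => sum_nonneg fun j _ => hB _
  have hexpand : ∑ i ∈ s, ∑ j ∈ s, B (v i - v j) (v i - v j) =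
      2 * (#s * ∑ i ∈ s, B (v i) (v i) - B (∑ i ∈ s, v i) (∑ i ∈ s, v i)) := by
    have hswap : ∑ i ∈ s, ∑ j ∈ s, B (v j) (v i) = ∑ i ∈ s, ∑ j ∈ s, B (v i) (v j) :=
      sum_comm
    simp only [map_sub, sub_apply, sum_sub_distrib, sum_const, nsmul_eq_mul, ← mul_sum,
      hswap, apply_sum_sum]
    ring
  rw [hexpand] at hdiff
  exact sub_nonneg.1 ((mul_nonneg_iff_of_pos_left two_pos).1 hdiff)

end LinearMap

theorem stmt15_general {V : Type*} [NormedAddCommGroup V] [InnerProductSpace ℝ V]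
    (𝒜 : V →ₗ[ℝ] V →ₗ[ℝ] ℝ)
    (hpos : ∀ v, v ≠ 0 → 0 < 𝒜 v v)
    (J Nc : ℕ) (Vs : Fin (J + 1) → Submodule ℝ V)
    (c : Fin (J + 1) → Fin Nc)
    (hcolor : ∀ i j, i ≠ j → c i = c j →
      ∀ vi ∈ Vs i, ∀ vj ∈ Vs j, 𝒜 vi vj = 0) :
    ∀ w : Fin (J + 1) → V, (∀ i, w i ∈ Vs i) →
      𝒜 (∑ i, w i) (∑ i, w i) ≤ (Nc : ℝ) * ∑ i, 𝒜 (w i) (w i) := by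
  intro w hw
  have hnonneg : ∀ v, 0 ≤ 𝒜 v v := fun v => by
    rcases eq_or_ne v 0 with rfl | hv
    · simp
    · exact (hpos v hv).le
  let u : Fin Nc → V := fun k => ∑ i with c i = k, w i
  have hcolour_class : ∀ k, 𝒜 (u k) (u k) = ∑ i with c i = k, 𝒜 (w i) (w i) := fun k =>
    𝒜.apply_sum_self_of_pairwise_eq_zero _ w fun i hi j hj hij =>
      hcolor i j hij ((mem_filter.1 hi).2.trans (mem_filter.1 hj).2.symm) _ (hw i) _ (hw j)
  calc 𝒜 (∑ i, w i) (∑ i, w i) = 𝒜 (∑ k, u k) (∑ k, u k) := by rw [sum_fiberwise]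
    _ ≤ Nc * ∑ k, 𝒜 (u k) (u k) := by
      simpa using 𝒜.apply_sum_self_le_card_mul hnonneg univ u
    _ = Nc * ∑ i, 𝒜 (w i) (w i) := by simp only [hcolour_class, sum_fiberwise]

/-- Coloring argument: if the index set is colored with N_c colors such that
subspaces with equal colors are 𝒜-orthogonal, then
‖Σᵢ vᵢ‖²_A ≤ N_c Σᵢ ‖vᵢ‖²_A. -/
theorem stmt15 {V : Type*} [NormedAddCommGroup V] [InnerProductSpace ℝ V]
    [FiniteDimensional ℝ V]
    (𝒜 : V →ₗ[ℝ] V →ₗ[ℝ] ℝ)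
    (hsymm : ∀ u v, 𝒜 u v = 𝒜 v u) (hpos : ∀ v, v ≠ 0 → 0 < 𝒜 v v)
    (J Nc : ℕ) (Vs : Fin (J + 1) → Submodule ℝ V)
    (c : Fin (J + 1) → Fin Nc)
    (hcolor : ∀ i j, i ≠ j → c i = c j →
      ∀ vi ∈ Vs i, ∀ vj ∈ Vs j, 𝒜 vi vj = 0) :
    ∀ w : Fin (J + 1) → V, (∀ i, w i ∈ Vs i) →
      𝒜 (∑ i, w i) (∑ i, w i) ≤ (Nc : ℝ) * ∑ i, 𝒜 (w i) (w i) :=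
  stmt15_general 𝒜 hpos J Nc Vs c hcolor
end

section
/- Let V be a finite-dimensional real inner product space, A symmetric positive definite on V, B symmetric positive definite on V, and let Ṽ ⊆ V be a subspace with codimension m₀. Suppose λ_max(B⁻¹A) ≤ Λ and that (A v, v) ≥ μ (B v, v) for all v ∈ Ṽ with μ > 0. Then B⁻¹A, which is self-adjoint with respect to the inner product (B·,·), has at least dim V − m₀ eigenvalues (counted with multiplicity) in the interval [μ, Λ]. -/
/-!
Since `B` is positive definite, `⟪B u, v⟫` is an inner product on `V`, for which `T = B⁻¹A` is
symmetric with `⟪T w, w⟫_B = ⟪A w, w⟫`; an orthonormal eigenbasis of `T` consists of generalized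
eigenvectors `A e = λ B e`. If `w ∈ Ṽ` has vanishing coordinates along the eigenvectors with
`λ ≥ μ`, then `⟪A w, w⟫ - μ ⟪B w, w⟫ = ∑ (λᵢ - μ) wᵢ²` is both `≥ 0` and a sum of terms `≤ 0`, so
`w = 0`. Hence these coordinates embed `Ṽ`, and at least `dim Ṽ = dim V - m₀` eigenvalues are
`≥ μ`; they are `≤ Λ` by hypothesis.
-/

open RealInnerProductSpace

namespace LinearMap.IsSymmetric

variable {E : Type*} [NormedAddCommGroup E] [InnerProductSpace ℝ E] [FiniteDimensional ℝ E]
  {T : E →ₗ[ℝ] E} (hT : T.IsSymmetric) {n : ℕ} (hn : Module.finrank ℝ E = n)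

theorem inner_map_self_eq_sum_eigenvalues_mul_sq (v : E) :
    ⟪T v, v⟫ = ∑ i, hT.eigenvalues hn i * ⟪hT.eigenvectorBasis hn i, v⟫ ^ 2 := by
  rw [← (hT.eigenvectorBasis hn).sum_inner_mul_inner]
  refine Finset.sum_congr rfl fun i _ => ?_
  rw [hT, hT.apply_eigenvectorBasis, real_inner_smul_right, real_inner_comm]
  simp only [RCLike.ofReal_real_eq_id, id_eq]
  ring

theorem injective_inner_eigenvectorBasis_of_le_inner {W : Submodule ℝ E} {μ : ℝ}
    (hW : ∀ w ∈ W, μ * ⟪w, w⟫ ≤ ⟪T w, w⟫) :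
    Function.Injective
      ((LinearMap.pi fun i : {i // μ ≤ hT.eigenvalues hn i} =>
        innerₛₗ ℝ (hT.eigenvectorBasis hn i)) ∘ₗ W.subtype) := by
  set b := hT.eigenvectorBasis hn
  set lam := hT.eigenvalues hn
  rw [← LinearMap.ker_eq_bot, LinearMap.ker_eq_bot']
  rintro ⟨w, hwW⟩ hw
  have hgood : ∀ i, μ ≤ lam i → ⟪b i, w⟫ = 0 := fun i hi => congr_fun hw ⟨i, hi⟩
  have hterm : ∀ i ∈ Finset.univ, (lam i - μ) * ⟪b i, w⟫ ^ 2 ≤ 0 := by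
    intro i _
    rcases lt_or_ge (lam i) μ with hi | hi
    · exact mul_nonpos_of_nonpos_of_nonneg (by linarith) (sq_nonneg _)
    · simp [hgood i hi]
  have hsum : ∑ i, (lam i - μ) * ⟪b i, w⟫ ^ 2 = ⟪T w, w⟫ - μ * ⟪w, w⟫ := by
    rw [hT.inner_map_self_eq_sum_eigenvalues_mul_sq hn, ← b.sum_inner_mul_inner w w,
      Finset.mul_sum, ← Finset.sum_sub_distrib]
    refine Finset.sum_congr rfl fun i _ => ?_
    rw [real_inner_comm w]
    ring
  have hzero := (Finset.sum_eq_zero_iff_of_nonpos hterm).1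
    (le_antisymm (Finset.sum_nonpos hterm) (by linarith [hW w hwW]))
  have hcoord : ∀ i, ⟪b i, w⟫ = 0 := by
    intro i
    rcases lt_or_ge (lam i) μ with hi | hi
    · simpa [sub_ne_zero.2 hi.ne] using hzero i (Finset.mem_univ _)
    · exact hgood i hi
  simp only [Submodule.mk_eq_zero]
  rw [← b.sum_repr' w]
  simp [hcoord]

-- One half of the Courant–Fischer min-max principle.
theorem finrank_le_card_le_eigenvalues {W : Submodule ℝ E} {μ : ℝ}
    (hW : ∀ w ∈ W, μ * ⟪w, w⟫ ≤ ⟪T w, w⟫) :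
    Module.finrank ℝ W ≤ Fintype.card {i // μ ≤ hT.eigenvalues hn i} := by
  simpa using LinearMap.finrank_le_finrank_of_injective
    (hT.injective_inner_eigenvectorBasis_of_le_inner hn hW)

end LinearMap.IsSymmetric

section Energy

variable {V : Type*} [NormedAddCommGroup V] [InnerProductSpace ℝ V]

abbrev LinearMap.IsSymmetric.energyCore {B : V →ₗ[ℝ] V} (hB : B.IsSymmetric)
    (hBpos : ∀ v, v ≠ 0 → 0 < ⟪B v, v⟫) : InnerProductSpace.Core ℝ V where
  inner u v := ⟪B u, v⟫
  conj_inner_symm u v := by simp [hB u v, real_inner_comm]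
  re_inner_nonneg v := by
    rcases eq_or_ne v 0 with rfl | hv
    · simp
    · exact (hBpos v hv).le
  add_left u v w := by simp [inner_add_left]
  smul_left u v r := by simp [real_inner_smul_left]
  definite v hv := by
    by_contra hne
    exact (hBpos v hne).ne' hv

/-- `V` equipped with the energy inner product `⟪B u, v⟫` of a positive definite `B`. -/
def WithEnergy (B : V →ₗ[ℝ] V) (_ : B.IsSymmetric) (_ : ∀ v, v ≠ 0 → 0 < ⟪B v, v⟫) :
    Type _ := V

namespace WithEnergy

variable {B : V →ₗ[ℝ] V} {hB : B.IsSymmetric} {hBpos : ∀ v, v ≠ 0 → 0 < ⟪B v, v⟫}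

instance : AddCommGroup (WithEnergy B hB hBpos) := inferInstanceAs (AddCommGroup V)

instance : Module ℝ (WithEnergy B hB hBpos) := inferInstanceAs (Module ℝ V)

instance [FiniteDimensional ℝ V] : FiniteDimensional ℝ (WithEnergy B hB hBpos) :=
  inferInstanceAs (FiniteDimensional ℝ V)

instance : InnerProductSpace.Core ℝ (WithEnergy B hB hBpos) := hB.energyCore hBpos

noncomputable instance : NormedAddCommGroup (WithEnergy B hB hBpos) :=
  InnerProductSpace.Core.toNormedAddCommGroup (𝕜 := ℝ)

noncomputable instance : InnerProductSpace ℝ (WithEnergy B hB hBpos) := InnerProductSpace.ofCore _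

end WithEnergy

theorem exists_linearIndependent_generalized_eigenvectors [FiniteDimensional ℝ V]
    {A B : V →ₗ[ℝ] V} (hA : A.IsSymmetric) (hB : B.IsSymmetric)
    (hBpos : ∀ v, v ≠ 0 → 0 < ⟪B v, v⟫) {W : Submodule ℝ V} {μ : ℝ}
    (hW : ∀ w ∈ W, μ * ⟪B w, w⟫ ≤ ⟪A w, w⟫) :
    ∃ (n : ℕ) (lam : Fin n → ℝ) (e : Fin n → V),
      Module.finrank ℝ W ≤ n ∧ LinearIndependent ℝ e ∧
      (∀ i, A (e i) = lam i • B (e i)) ∧ ∀ i, μ ≤ lam i := by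
  have hBinj : Function.Injective B := by
    refine (injective_iff_map_eq_zero B).2 fun v hv => ?_
    by_contra hne
    simpa [hv] using hBpos v hne
  let Binv := (LinearEquiv.ofInjectiveEndo B hBinj).symm
  have hBBinv (v : V) : B (Binv v) = v := (LinearEquiv.ofInjectiveEndo B hBinj).apply_symm_apply v
  have hA' (u v : V) : ⟪B (Binv (A u)), v⟫ = ⟪B u, Binv (A v)⟫ := by
    rw [hBBinv, hB, hBBinv, hA]
  have hW' : ∀ w ∈ W, μ * ⟪B w, w⟫ ≤ ⟪B (Binv (A w)), w⟫ := by simpa only [hBBinv] using hW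
  have heig (u : V) (c : ℝ) (h : Binv (A u) = c • u) : A u = c • B u := by
    simpa [hBBinv] using congrArg B h
  let T : WithEnergy B hB hBpos →ₗ[ℝ] WithEnergy B hB hBpos := Binv.toLinearMap ∘ₗ A
  have hT : T.IsSymmetric := hA'
  have hn := rfl (a := Module.finrank ℝ (WithEnergy B hB hBpos))
  let b := hT.eigenvectorBasis hn
  let lam := hT.eigenvalues hn
  have hcard : Module.finrank ℝ W ≤ Fintype.card {i // μ ≤ lam i} :=
    hT.finrank_le_card_le_eigenvalues hn hW'
  let g := Fintype.equivFin {i // μ ≤ lam i}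
  refine ⟨_, fun k => lam (g.symm k), fun k => b (g.symm k), hcard, ?_, fun k => ?_,
    fun k => (g.symm k).2⟩
  · exact b.orthonormal.linearIndependent.comp _ (Subtype.val_injective.comp g.symm.injective)
  · exact heig _ _ (hT.apply_eigenvectorBasis hn (g.symm k))

end Energy

theorem stmt18_general {V : Type*} [NormedAddCommGroup V] [InnerProductSpace ℝ V]
    [FiniteDimensional ℝ V]
    (A B : V →ₗ[ℝ] V)
    (hAsymm : ∀ u v, ⟪A u, v⟫ = ⟪u, A v⟫)
    (hBsymm : ∀ u v, ⟪B u, v⟫ = ⟪u, B v⟫)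
    (hBpos : ∀ v, v ≠ 0 → 0 < ⟪B v, v⟫)
    (Vt : Submodule ℝ V) (m₀ : ℕ)
    (hcodim : Module.finrank ℝ V - Module.finrank ℝ Vt = m₀)
    (Λ μ : ℝ)
    (hmax : ∀ (lam : ℝ) (v : V), v ≠ 0 → A v = lam • B v → lam ≤ Λ)
    (hcoer : ∀ v ∈ Vt, μ * ⟪B v, v⟫ ≤ ⟪A v, v⟫) :
    ∃ (n : ℕ) (lam : Fin n → ℝ) (e : Fin n → V),
      Module.finrank ℝ V - m₀ ≤ n ∧
      LinearIndependent ℝ e ∧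
      (∀ i, A (e i) = lam i • B (e i)) ∧
      (∀ i, lam i ∈ Set.Icc μ Λ) := by
  obtain ⟨n, lam, e, hdim, he, heig, hμ⟩ :=
    exists_linearIndependent_generalized_eigenvectors hAsymm hBsymm hBpos hcoer
  have hVt : Module.finrank ℝ Vt ≤ Module.finrank ℝ V := Vt.finrank_le
  exact ⟨n, lam, e, by omega, he, heig, fun i => ⟨hμ i, hmax _ _ (he.ne_zero i) (heig i)⟩⟩

/-- Reduced condition number spectral statement: if λ_max(B⁻¹A) ≤ Λ and
(Av,v) ≥ μ(Bv,v) on a subspace Ṽ of codimension m₀, then B⁻¹A has at least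
dim V − m₀ eigenvalues (with multiplicity, i.e. linearly independent
generalized eigenvectors) in [μ, Λ]. -/
theorem stmt18 {V : Type*} [NormedAddCommGroup V] [InnerProductSpace ℝ V]
    [FiniteDimensional ℝ V]
    (A B : V →ₗ[ℝ] V)
    (hAsymm : ∀ u v, ⟪A u, v⟫ = ⟪u, A v⟫)
    (hApos : ∀ v, v ≠ 0 → 0 < ⟪A v, v⟫)
    (hBsymm : ∀ u v, ⟪B u, v⟫ = ⟪u, B v⟫)
    (hBpos : ∀ v, v ≠ 0 → 0 < ⟪B v, v⟫)
    (Vt : Submodule ℝ V) (m₀ : ℕ)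
    (hcodim : Module.finrank ℝ V - Module.finrank ℝ Vt = m₀)
    (Λ μ : ℝ) (hμ : 0 < μ)
    (hmax : ∀ (lam : ℝ) (v : V), v ≠ 0 → A v = lam • B v → lam ≤ Λ)
    (hcoer : ∀ v ∈ Vt, μ * ⟪B v, v⟫ ≤ ⟪A v, v⟫) :
    ∃ (n : ℕ) (lam : Fin n → ℝ) (e : Fin n → V),
      Module.finrank ℝ V - m₀ ≤ n ∧
      LinearIndependent ℝ e ∧
      (∀ i, A (e i) = lam i • B (e i)) ∧
      (∀ i, lam i ∈ Set.Icc μ Λ) :=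
  stmt18_general A B hAsymm hBsymm hBpos Vt m₀ hcodim Λ μ hmax hcoer
end
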